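/- For α > 2, let G be a non-tree equilibrium graph of the max-distance network creation game and H a biconnected component of G. Assign each vertex w of G to its unique closest vertex v of H, giving sets S(v). Then for every v ∈ V(H) and every w ∈ S(v), d_G(v,w) ≤ D(v) + 2 − α. -/

import Mathlib

/-!
Max-distance network creation game (Demaine et al.):
`n` agents, agent `v` buys edges to the agents in `s v`, each at cost `α`.
The resulting graph has an edge `(u,v)` iff `u ∈ s v` or `v ∈ s u`.
Agent `v`'s cost is `α * |s v|` plus its eccentricity (max distance, `⊤` if
disconnected). A profile is a (pure Nash) equilibrium if no agent can strictly
decrease its cost by unilaterally changing its edge set.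
-/

open SimpleGraph
open scoped ENNReal

namespace NCG

/-- The undirected graph created by strategy profile `s`. -/
def graph (n : ℕ) (s : Fin n → Finset (Fin n)) : SimpleGraph (Fin n) :=
  SimpleGraph.fromRel (fun u v => v ∈ s u)

/-- Eccentricity `D(v) = max_u d_G(v,u)`, valued in `ℕ∞`. -/
noncomputable def ecc {n : ℕ} (G : SimpleGraph (Fin n)) (v : Fin n) : ℕ∞ :=
  ⨆ u, G.edist v u

/-- The cost of agent `v` under profile `s`: `α·|s v| + D(v)` (infinite if the
graph is disconnected). -/
noncomputable def cost {n : ℕ} (α : ℝ) (s : Fin n → Finset (Fin n)) (v : Fin n) : ℝ≥0∞ :=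
  ENNReal.ofReal α * (s v).card + (ecc (graph n s) v : ℝ≥0∞)

/-- Pure Nash equilibrium: no agent can strictly decrease its cost by a
unilateral deviation. -/
def IsEquilibrium {n : ℕ} (α : ℝ) (s : Fin n → Finset (Fin n)) : Prop :=
  ∀ (v : Fin n) (t : Finset (Fin n)), cost α s v ≤ cost α (Function.update s v t) v

/-- Radius `rad(G) = min_v D(v)`. -/
noncomputable def radius {n : ℕ} (G : SimpleGraph (Fin n)) : ℕ∞ :=
  ⨅ v, ecc G v

/-- Diameter `diam(G) = max_v D(v)`. -/
noncomputable def diam {n : ℕ} (G : SimpleGraph (Fin n)) : ℕ∞ :=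
  ⨆ v, ecc G v

/-- Interpret an extended natural number as a real number (`⊤ ↦ 0`). -/
noncomputable def entoR (x : ℕ∞) : ℝ := ((x : ℝ≥0∞)).toReal

/-- `T` is a shortest path tree of `G` rooted at `b`: a spanning tree of `G`
preserving all distances from `b`. -/
def IsSPT {n : ℕ} (G T : SimpleGraph (Fin n)) (b : Fin n) : Prop :=
  T ≤ G ∧ T.IsTree ∧ ∀ v, T.edist b v = G.edist b v

/-- `p` is the parent of `a` in the tree `T` rooted at `b`. -/
def IsParent {n : ℕ} (T : SimpleGraph (Fin n)) (b a p : Fin n) : Prop :=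
  T.Adj a p ∧ T.edist b p + 1 = T.edist b a

/-- The vertex set `B` (with more than two vertices) induces a biconnected
subgraph: removing any single vertex leaves it connected. -/
def IsBiconnected {n : ℕ} (G : SimpleGraph (Fin n)) (B : Finset (Fin n)) : Prop :=
  2 < B.card ∧ ∀ v ∈ B, (G.induce ((B : Set (Fin n)) \ {v})).Connected

/-- `B` is (the vertex set of) a biconnected component of `G`: a maximal
biconnected subgraph with more than two vertices. -/
def IsBicomp {n : ℕ} (G : SimpleGraph (Fin n)) (B : Finset (Fin n)) : Prop :=
  IsBiconnected G B ∧ ∀ B' : Finset (Fin n), B ⊆ B' → IsBiconnected G B' → B' = B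

/-- The induced subgraph of `G` on the vertex set `B`. -/
def Hgraph {n : ℕ} (G : SimpleGraph (Fin n)) (B : Finset (Fin n)) :
    SimpleGraph ((B : Set (Fin n))) :=
  G.induce (B : Set (Fin n))

/-- The degree of `v` inside the induced subgraph on `B`. -/
noncomputable def degH {n : ℕ} (G : SimpleGraph (Fin n)) (B : Finset (Fin n)) (v : Fin n) : ℕ :=
  {u : Fin n | u ∈ B ∧ G.Adj v u}.ncard

/-- A min cycle: a cycle whose internal (cycle) distances agree with the
distances in `G`, i.e. an isometric cycle. -/
def IsMinCycle {n : ℕ} (G : SimpleGraph (Fin n)) {v : Fin n} (c : G.Walk v v) : Prop :=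
  c.IsCycle ∧ ∀ x₁ ∈ c.support, ∀ x₂ ∈ c.support,
    c.toSubgraph.spanningCoe.edist x₁ x₂ = G.edist x₁ x₂

/-- A directed cycle: going around the cycle, each vertex buys the edge to its
successor (in one of the two cyclic orientations). -/
def IsDirectedCycle {n : ℕ} (s : Fin n → Finset (Fin n)) {v : Fin n}
    (c : (graph n s).Walk v v) : Prop :=
  (∀ d ∈ c.darts, d.toProd.2 ∈ s d.toProd.1) ∨ (∀ d ∈ c.darts, d.toProd.1 ∈ s d.toProd.2)

/-- A shopping vertex of the biconnected component `B` w.r.t. the shortest path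
tree `T`: a vertex of `B` buying an edge of the component that is not in `T`. -/
def IsShopping {n : ℕ} (s : Fin n → Finset (Fin n)) (T : SimpleGraph (Fin n))
    (B : Finset (Fin n)) (u : Fin n) : Prop :=
  u ∈ B ∧ ∃ w ∈ B, w ∈ s u ∧ (graph n s).Adj u w ∧ ¬ T.Adj u w

/-- The social cost of profile `s`. -/
noncomputable def socialCost {n : ℕ} (α : ℝ) (s : Fin n → Finset (Fin n)) : ℝ≥0∞ :=
  ∑ v, cost α s v

end NCG


/-!
Let `a` be a vertex of `H` farthest from `v` and `p` a neighbour of `a` one step closer to `v`.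
Since `H` is biconnected, `a` has a neighbour `b ∈ H` other than `p`, and deleting the edge `ab`
changes no distance from `v` (every vertex keeps a neighbour one step closer to `v`). The endpoint
`c` that bought `ab` could drop it and save `α`; afterwards `D(c) ≤ d(c,v) + D(v)`, so by
equilibrium `α + D(c) ≤ d(c,v) + D(v)`. On the other hand `v` is the gate of `H` towards `w`: if
shortest routes from `H` to `w` left `H` at two vertices, they would form an ear enlarging `H`.
Hence `D(c) ≥ d(c,w) = d(c,v) + d(v,w)`, and `α + d(v,w) ≤ D(v)`.
-/

namespace SimpleGraph

variable {V : Type*} {G : SimpleGraph V}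

lemma exists_adj_edist_add_one {v x : V} (hx : G.edist v x ≠ ⊤) (hxv : x ≠ v) :
    ∃ y, G.Adj y x ∧ G.edist v y + 1 = G.edist v x := by
  obtain ⟨p, hp⟩ := (reachable_of_edist_ne_top hx).symm.exists_walk_length_eq_edist
  cases p with
  | nil => exact absurd rfl hxv
  | cons h q =>
    refine ⟨_, h.symm, le_antisymm ?_ ?_⟩
    · rw [edist_comm, edist_comm (u := v), ← hp, Walk.length_cons, Nat.cast_add, Nat.cast_one]
      gcongr
      exact edist_le q
    · rw [← edist_eq_one_iff_adj.2 h.symm]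
      exact SimpleGraph.edist_triangle

lemma edist_le_of_forall_exists_adj {G' : SimpleGraph V} {v : V}
    (h : ∀ x, x ≠ v → G.edist v x ≠ ⊤ → ∃ y, G'.Adj y x ∧ G.edist v y + 1 = G.edist v x)
    (x : V) : G'.edist v x ≤ G.edist v x := by
  suffices key : ∀ k : ℕ, ∀ x, G.edist v x = k → G'.edist v x ≤ k by
    cases hx : G.edist v x using ENat.recTopCoe with
    | top => exact le_top
    | coe k => exact key k x hx
  intro k
  induction k with
  | zero =>
    intro x hx
    rw [Nat.cast_zero, edist_eq_zero_iff] at hx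
    simp [hx]
  | succ k ih =>
    intro x hx
    have hxv : x ≠ v := by rintro rfl; rw [edist_self] at hx; norm_cast at hx
    obtain ⟨y, hyx, hy⟩ := h x hxv (by simp [hx])
    have hyk : G.edist v y = k := by
      rw [hx, Nat.cast_add, Nat.cast_one] at hy
      exact WithTop.add_right_cancel ENat.one_ne_top hy
    calc G'.edist v x ≤ G'.edist v y + G'.edist y x := SimpleGraph.edist_triangle
      _ ≤ k + 1 := add_le_add (ih y hyk) (edist_eq_one_iff_adj.2 hyx).le
      _ = (k + 1 : ℕ) := by push_cast; rfl

lemma edist_deleteEdges_le {v a b p : V} (hpa : G.Adj p a)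
    (hp : G.edist v p + 1 = G.edist v a) (hpb : p ≠ b) (hab : G.edist v a + 1 ≠ G.edist v b)
    (x : V) : (G.deleteEdges {s(a, b)}).edist v x ≤ G.edist v x := by
  refine edist_le_of_forall_exists_adj (fun x hxv hx => ?_) x
  by_cases hxa : x = a
  · subst hxa
    refine ⟨p, (deleteEdges_adj ..).2 ⟨hpa, ?_⟩, hp⟩
    simp [hpb, hpa.ne]
  · obtain ⟨y, hyx, hy⟩ := exists_adj_edist_add_one hx hxv
    refine ⟨y, (deleteEdges_adj ..).2 ⟨hyx, ?_⟩, hy⟩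
    simp only [Set.mem_singleton_iff, Sym2.eq_iff]
    rintro (⟨rfl, rfl⟩ | ⟨rfl, rfl⟩)
    · exact hab hy
    · exact hxa rfl

namespace Walk

variable {u v w : V}

lemma IsPath.append {p : G.Walk u v} {q : G.Walk v w} (hp : p.IsPath) (hq : q.IsPath)
    (h : ∀ y ∈ p.support, y ∈ q.support → y = v) : (p.append q).IsPath := by
  have hq' := hq.support_nodup
  rw [← cons_tail_support] at hq'
  rw [isPath_def, support_append, List.nodup_append]
  refine ⟨hp.support_nodup, (List.nodup_cons.1 hq').2, fun y hy y' hy' hyy' => ?_⟩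
  subst hyy'
  rw [h y hy (List.mem_of_mem_tail hy')] at hy'
  exact (List.nodup_cons.1 hq').1 hy'

lemma exists_append_eq_of_first_mem (T : Set V) (p : G.Walk u w) (hw : w ∈ T) :
    ∃ z ∈ T, ∃ (q : G.Walk u z) (r : G.Walk z w), q.append r = p ∧
      ∀ y ∈ q.support, y ∈ T → y = z := by
  induction p with
  | nil => exact ⟨_, hw, nil, nil, rfl, by simp⟩
  | @cons a x w hadj p ih =>
    by_cases ha : a ∈ T
    · exact ⟨a, ha, nil, cons hadj p, rfl, by simp⟩
    · obtain ⟨z, hzT, q, r, rfl, hfirst⟩ := ih hw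
      refine ⟨z, hzT, cons hadj q, r, rfl, ?_⟩
      intro y hy hyT
      rw [support_cons, List.mem_cons] at hy
      rcases hy with rfl | hy
      · exact absurd hyT ha
      · exact hfirst y hy hyT

lemma IsPath.exists_walk_avoiding {p : G.Walk u v} (hp : p.IsPath) {i x : V}
    (hi : i ∈ p.support) (hxi : x ≠ i) :
    ∃ t, (t = u ∨ t = v) ∧ ∃ r : G.Walk i t, x ∉ r.support ∧ ∀ y ∈ r.support, y ∈ p.support := by
  obtain ⟨q, r, -, -, rfl⟩ := hp.mem_support_iff_exists_append.1 hi
  by_cases hx : x ∈ q.support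
  · exact ⟨v, Or.inr rfl, r, fun hxr => hp.ne_of_mem_support_of_append hxi hx hxr rfl,
      fun y hy => (mem_support_append_iff _ _).2 (Or.inr hy)⟩
  · refine ⟨u, Or.inl rfl, q.reverse, by simpa using hx, fun y hy => ?_⟩
    exact (mem_support_append_iff _ _).2 (Or.inl (by simpa using hy))

end Walk

end SimpleGraph

namespace NCG

variable {n : ℕ}

lemma graph_adj (s : Fin n → Finset (Fin n)) (u v : Fin n) :
    (graph n s).Adj u v ↔ u ≠ v ∧ (v ∈ s u ∨ u ∈ s v) :=
  fromRel_adj ..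

lemma deleteEdges_le_graph_update_erase (s : Fin n → Finset (Fin n)) (c o : Fin n) :
    (graph n s).deleteEdges {s(c, o)} ≤ graph n (Function.update s c ((s c).erase o)) := by
  intro x y hxy
  rw [deleteEdges_adj, graph_adj] at hxy
  rw [graph_adj]
  simp only [Function.update_apply]
  aesop

lemma edist_le_ecc (G : SimpleGraph (Fin n)) (v u : Fin n) : G.edist v u ≤ ecc G v :=
  le_iSup (G.edist v ·) u

lemma ecc_le_edist_add_ecc (G : SimpleGraph (Fin n)) (c v : Fin n) :
    ecc G c ≤ G.edist c v + ecc G v :=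
  iSup_le fun u => SimpleGraph.edist_triangle.trans (add_le_add le_rfl (edist_le_ecc G v u))

lemma ecc_anti {G G' : SimpleGraph (Fin n)} (h : G ≤ G') (v : Fin n) : ecc G' v ≤ ecc G v :=
  iSup_mono fun _ => edist_anti h

lemma add_entoR_le_entoR {α : ℝ} {x y : ℕ∞} (h : ENNReal.ofReal α + x ≤ y) (hy : y ≠ ⊤) :
    α + entoR x ≤ entoR y := by
  have hy' : (y : ℝ≥0∞) ≠ ⊤ := by simpa using hy
  have hx : (x : ℝ≥0∞) ≠ ⊤ := ne_top_of_le_ne_top hy' (le_add_self.trans h)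
  have := ENNReal.toReal_mono hy' h
  rw [ENNReal.toReal_add ENNReal.ofReal_ne_top hx, ENNReal.toReal_ofReal'] at this
  unfold entoR
  linarith [le_max_left α 0]

variable {G : SimpleGraph (Fin n)} {B : Finset (Fin n)}

namespace IsBiconnected

lemma connected_induce (hB : IsBiconnected G B) : (G.induce (B : Set (Fin n))).Connected := by
  obtain ⟨r₁, hr₁, r₂, hr₂, r₃, hr₃, h₁₂, h₁₃, h₂₃⟩ := Finset.two_lt_card.1 hB.1
  have hcover : (B : Set (Fin n)) = ((B : Set (Fin n)) \ {r₁}) ∪ ((B : Set (Fin n)) \ {r₂}) := by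
    ext y
    by_cases hy : y = r₁
    · simp [hy, h₁₂]
    · simp +contextual [hy]
  rw [hcover]
  exact induce_union_connected (hB.2 r₁ hr₁).preconnected (hB.2 r₂ hr₂).preconnected
    ⟨r₃, by simp [hr₃, h₁₃.symm, h₂₃.symm]⟩

lemma connected_induce_sdiff (hB : IsBiconnected G B) (x : Fin n) :
    (G.induce ((B : Set (Fin n)) \ {x})).Connected := by
  by_cases hx : x ∈ B
  · exact hB.2 x hx
  · rw [Set.sdiff_singleton_eq_self (by simpa using hx)]
    exact hB.connected_induce

lemma reachable (hB : IsBiconnected G B) {a b : Fin n} (ha : a ∈ B) (hb : b ∈ B) :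
    G.Reachable a b :=
  (hB.connected_induce.preconnected ⟨a, ha⟩ ⟨b, hb⟩).map (Embedding.induce _).toHom

lemma exists_adj_ne (hB : IsBiconnected G B) {a z : Fin n} (ha : a ∈ B) (hza : z ≠ a) :
    ∃ y ∈ B, y ≠ z ∧ G.Adj a y := by
  obtain ⟨t, ht⟩ : ((B.erase a).erase z).Nonempty := by
    rw [← Finset.card_pos]
    have := Finset.pred_card_le_card_erase (s := B.erase a) (a := z)
    have := Finset.card_erase_of_mem ha
    have := hB.1
    omega
  simp only [Finset.mem_erase] at ht
  have hconn : (G.induce ((B : Set (Fin n)) \ {z})).Preconnected :=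
    (hB.connected_induce_sdiff z).preconnected
  obtain ⟨p⟩ := hconn ⟨a, by simp [ha, hza.symm]⟩ ⟨t, by simp [ht.2.2, ht.1]⟩
  have hp := p.adj_snd (p.not_nil_of_ne (by simpa using ht.2.1.symm))
  exact ⟨p.snd, by simpa using p.snd.2.1, p.snd.2.2, hp⟩

lemma exists_adj_edist_deleteEdges_le (hB : IsBiconnected G B) {v : Fin n} (hv : v ∈ B) :
    ∃ a ∈ B, ∃ b ∈ B, G.Adj a b ∧
      ∀ x, (G.deleteEdges {s(a, b)}).edist v x ≤ G.edist v x := by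
  obtain ⟨a, ha, hfar⟩ :=
    B.exists_max_image (G.edist v) (Finset.card_pos.1 (by have := hB.1; omega))
  have hfin : G.edist v a ≠ ⊤ := edist_ne_top_iff_reachable.2 (hB.reachable hv ha)
  have hav : a ≠ v := by
    obtain ⟨b, hb, hbv⟩ := B.exists_mem_ne (by have := hB.1; omega) v
    rintro rfl
    have hb0 := hfar b hb
    rw [edist_self, nonpos_iff_eq_zero, edist_eq_zero_iff] at hb0
    exact hbv hb0.symm
  obtain ⟨p, hpa, hp⟩ := exists_adj_edist_add_one hfin hav
  obtain ⟨b, hb, hbp, hab⟩ := hB.exists_adj_ne ha hpa.ne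
  refine ⟨a, ha, b, hb, hab, edist_deleteEdges_le hpa hp hbp.symm fun h => ?_⟩
  exact ((ENat.lt_add_one_iff hfin).2 le_rfl).not_ge (h ▸ hfar b hb)

/-- Removing `x`, every vertex of the ear still reaches `u` or `v` along the path, and
`B \ {x}` stays connected. -/
lemma union_support (hB : IsBiconnected G B) {u v : Fin n} (hu : u ∈ B) (hv : v ∈ B)
    {E : G.Walk u v} (hE : E.IsPath) : IsBiconnected G (B ∪ E.support.toFinset) := by
  refine ⟨hB.1.trans_le (Finset.card_le_card Finset.subset_union_left), fun x _ => ?_⟩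
  have hBx := hB.connected_induce_sdiff x
  obtain ⟨⟨b₀, hb₀⟩⟩ := hBx.nonempty
  refine induce_connected_of_patches b₀ (by simp_all) fun {p} hp => ?_
  simp only [Finset.coe_union, List.coe_toFinset, Set.mem_sdiff, Set.mem_union,
    Finset.mem_coe, Set.mem_ofPred_eq, Set.mem_singleton_iff] at hp
  by_cases hpB : p ∈ B
  · exact ⟨_, Set.sdiff_subset_sdiff_left (by simp), hb₀, by simp [hpB, hp.2],
      hBx.preconnected _ _⟩
  obtain ⟨t, ht, r, hxr, hrE⟩ := hE.exists_walk_avoiding (hp.1.resolve_left hpB) (Ne.symm hp.2)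
  have htB : t ∈ (B : Set (Fin n)) \ {x} := by
    refine ⟨by rcases ht with rfl | rfl <;> assumption, ?_⟩
    rintro rfl
    exact hxr r.end_mem_support
  refine ⟨((B : Set (Fin n)) \ {x}) ∪ {y | y ∈ r.support}, ?_, Or.inl hb₀,
    Or.inr r.start_mem_support, ?_⟩
  · rintro y (⟨hyB, hyx⟩ | hyr)
    · exact ⟨by simp [hyB], hyx⟩
    · exact ⟨by simp [hrE y hyr], by rintro rfl; exact hxr hyr⟩
  · exact (induce_union_connected hBx.preconnected r.connected_induce_support.preconnected
      ⟨t, htB, r.end_mem_support⟩).preconnected _ _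

end IsBiconnected

namespace IsBicomp

/-- The last vertex `z` of `W` on `Q` closes an ear `u → z → v` of `B`; maximality of `B` puts `z`
in `B`, so `u = z = v`. -/
lemma eq_of_walks (hB : IsBicomp G B) {u v w : Fin n} (hu : u ∈ B) (hv : v ∈ B)
    (W : G.Walk w u) (Q : G.Walk w v) (hW : ∀ y ∈ W.support, y ∈ B → y = u)
    (hQ : ∀ y ∈ Q.support, y ∈ B → y = v) : u = v := by
  classical
  obtain ⟨z, hzQ, Pa, Pb, hsplit, hfirst⟩ :=
    W.bypass.reverse.exists_append_eq_of_first_mem {y | y ∈ Q.bypass.support}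
      Q.bypass.start_mem_support
  have hPa : Pa.IsPath := by
    have := W.bypass_isPath.reverse
    rw [← hsplit] at this
    exact this.of_append_left
  have hE : (Pa.append (Q.bypass.dropUntil z hzQ)).IsPath :=
    hPa.append (Q.bypass_isPath.dropUntil hzQ) fun y hy hy' =>
      hfirst y hy (Q.bypass.support_dropUntil_subset_support hzQ hy')
  have hzB : z ∈ B := by
    rw [← hB.2 _ Finset.subset_union_left (hB.1.union_support hu hv hE)]
    simp
  have hzW : z ∈ W.support := by
    have hz : z ∈ W.bypass.reverse.support :=
      hsplit ▸ (Walk.mem_support_append_iff _ _).2 (Or.inl Pa.end_mem_support)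
    rw [Walk.support_reverse, List.mem_reverse] at hz
    exact W.support_bypass_subset_support hz
  exact (hW z hzW hzB).symm.trans (hQ z (Q.support_bypass_subset_support hzQ) hzB)

lemma edist_add_edist_le (hB : IsBicomp G B) {c v w : Fin n} (hc : c ∈ B) (hv : v ∈ B)
    (hclosest : ∀ u ∈ B, G.edist v w ≤ G.edist u w) :
    G.edist c v + G.edist v w ≤ G.edist c w := by
  rcases eq_or_ne (G.edist c w) ⊤ with hcw | hcw
  · simp [hcw]
  obtain ⟨P, hP⟩ := (reachable_of_edist_ne_top hcw).exists_walk_length_eq_edist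
  obtain ⟨Q, hQ⟩ := (reachable_of_edist_ne_top
    ((hclosest c hc).trans_lt hcw.lt_top).ne).exists_walk_length_eq_edist
  obtain ⟨u, hu, W, W', hPW, hW⟩ :=
    P.reverse.exists_append_eq_of_first_mem (B : Set (Fin n)) (by simpa)
  obtain ⟨u', hu', R, R', hQR, hR⟩ :=
    Q.reverse.exists_append_eq_of_first_mem (B : Set (Fin n)) (by simpa)
  obtain rfl := hB.eq_of_walks hu hu' W R hW hR
  have hR' : R'.length = 0 := by
    have hlen := congrArg Walk.length hQR
    rw [Walk.length_append, Walk.length_reverse] at hlen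
    have hle : (Q.length : ℕ∞) ≤ R.length := by
      rw [hQ]
      calc G.edist v w ≤ G.edist u w := hclosest u hu
        _ = G.edist w u := SimpleGraph.edist_comm
        _ ≤ R.length := edist_le R
    norm_cast at hle
    omega
  obtain rfl := R'.eq_of_length_eq_zero hR'
  have hlen := congrArg Walk.length hPW
  rw [Walk.length_append, Walk.length_reverse] at hlen
  calc G.edist c u + G.edist u w ≤ W'.length + W.length := by
        rw [SimpleGraph.edist_comm (u := c), SimpleGraph.edist_comm (u := u) (v := w)]
        exact add_le_add (edist_le W') (edist_le W)
    _ = G.edist c w := by rw [← hP, ← hlen]; push_cast; ring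

end IsBicomp

variable {α : ℝ} {s : Fin n → Finset (Fin n)}

namespace IsEquilibrium

lemma ecc_ne_top (hs : IsEquilibrium α s) (v : Fin n) : ecc (graph n s) v ≠ ⊤ := by
  have hbuyAll := hs v (Finset.univ.erase v)
  have hecc : ecc (graph n (Function.update s v (Finset.univ.erase v))) v ≤ 1 :=
    iSup_le fun u => by
      rcases eq_or_ne v u with rfl | hne
      · simp
      · exact (edist_eq_one_iff_adj.2 ((graph_adj ..).2 ⟨hne, Or.inl (by simp [hne.symm])⟩)).le
  intro htop
  simp [cost, htop, ENNReal.mul_eq_top] at hbuyAll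
  simp [hbuyAll] at hecc

lemma edist_ne_top (hs : IsEquilibrium α s) (u v : Fin n) : (graph n s).edist u v ≠ ⊤ :=
  ne_top_of_le_ne_top (hs.ecc_ne_top u) (edist_le_ecc _ u v)

lemma ofReal_add_ecc_le (hs : IsEquilibrium α s) {c o : Fin n} (ho : o ∈ s c) :
    ENNReal.ofReal α + ecc (graph n s) c ≤
      ecc (graph n (Function.update s c ((s c).erase o))) c := by
  have h := hs c ((s c).erase o)
  rw [cost, cost, Function.update_self, ← Finset.card_erase_add_one ho, Nat.cast_add,
    Nat.cast_one, mul_add, mul_one, add_assoc] at h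
  exact (ENNReal.add_le_add_iff_left (ENNReal.mul_ne_top ENNReal.ofReal_ne_top (by simp))).1 h

lemma ofReal_add_edist_le_ecc (hs : IsEquilibrium α s) {c o v w : Fin n} (ho : o ∈ s c)
    (hdel : ∀ x, ((graph n s).deleteEdges {s(c, o)}).edist v x ≤ (graph n s).edist v x)
    (hgate : (graph n s).edist c v + (graph n s).edist v w ≤ (graph n s).edist c w) :
    ENNReal.ofReal α + (graph n s).edist v w ≤ ecc (graph n s) v := by
  set G := graph n s
  set Gdel := G.deleteEdges {s(c, o)}
  have hdev : ecc (graph n (Function.update s c ((s c).erase o))) c ≤ G.edist c v + ecc G v :=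
    calc _ ≤ ecc Gdel c := ecc_anti (deleteEdges_le_graph_update_erase s c o) c
      _ ≤ Gdel.edist c v + ecc Gdel v := ecc_le_edist_add_ecc _ _ _
      _ ≤ G.edist c v + ecc G v := by
        refine add_le_add ?_ (iSup_mono hdel)
        rw [SimpleGraph.edist_comm, SimpleGraph.edist_comm (G := G)]
        exact hdel c
  have hcv : ((G.edist c v : ℕ∞) : ℝ≥0∞) ≠ ⊤ := by simpa using hs.edist_ne_top c v
  refine (ENNReal.add_le_add_iff_left hcv).1 ?_
  calc ((G.edist c v : ℕ∞) : ℝ≥0∞) + (ENNReal.ofReal α + G.edist v w)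
      = ENNReal.ofReal α + ((G.edist c v + G.edist v w : ℕ∞) : ℝ≥0∞) := by push_cast; ring
    _ ≤ ENNReal.ofReal α + ecc G c := by
        gcongr
        exact_mod_cast hgate.trans (edist_le_ecc G c w)
    _ ≤ ecc (graph n (Function.update s c ((s c).erase o))) c := hs.ofReal_add_ecc_le ho
    _ ≤ ((G.edist c v + ecc G v : ℕ∞) : ℝ≥0∞) := by exact_mod_cast hdev
    _ = _ := by push_cast; rfl

end IsEquilibrium

end NCG

open NCG
theorem assigned_vertex_close_general (n : ℕ) (α : ℝ)
    (s : Fin n → Finset (Fin n)) (hs : IsEquilibrium α s)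
    (B : Finset (Fin n)) (hB : IsBicomp (graph n s) B)
    (v w : Fin n) (hv : v ∈ B)
    (hclosest : ∀ u ∈ B, (graph n s).edist v w ≤ (graph n s).edist u w) :
    entoR ((graph n s).edist v w) ≤ entoR (ecc (graph n s) v) + 2 - α := by
  obtain ⟨a, ha, b, hb, hab, hdel⟩ := hB.1.exists_adj_edist_deleteEdges_le hv
  have key : ENNReal.ofReal α + (graph n s).edist v w ≤ ecc (graph n s) v := by
    rcases ((graph_adj s a b).1 hab).2 with hbuy | hbuy
    · exact hs.ofReal_add_edist_le_ecc hbuy hdel (hB.edist_add_edist_le ha hv hclosest)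
    · rw [Sym2.eq_swap] at hdel
      exact hs.ofReal_add_edist_le_ecc hbuy hdel (hB.edist_add_edist_le hb hv hclosest)
  have hreal := add_entoR_le_entoR key (hs.ecc_ne_top v)
  linarith

/-- for `α > 2`, if `w` is assigned to its closest vertex `v` of the
biconnected component `B`, then `d_G(v,w) ≤ D(v) + 2 − α`. -/
theorem assigned_vertex_close (n : ℕ) (α : ℝ) (hα : 2 < α)
    (s : Fin n → Finset (Fin n)) (hs : IsEquilibrium α s)
    (hnt : ¬ (graph n s).IsTree)
    (B : Finset (Fin n)) (hB : IsBicomp (graph n s) B)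
    (v w : Fin n) (hv : v ∈ B)
    (hclosest : ∀ u ∈ B, (graph n s).edist v w ≤ (graph n s).edist u w) :
    entoR ((graph n s).edist v w) ≤ entoR (ecc (graph n s) v) + 2 - α :=
  assigned_vertex_close_general n α s hs B hB v w hv hclosest
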